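/- arXiv:1307.6396 — 5 statements merged into one kernel-verified Lean document; each statement's English description precedes it below -/
import Mathlib

section
/- Let λ be a regular uncountable cardinal and α < λ⁺. Let ⟨u^i_α : i < λ⟩ be a continuously increasing sequence of subsets of α, each of cardinality less than λ, with union α, where 'continuously increasing' means u^j_α = ⋃_{i<j} u^i_α for limit j. Fix such systems for all β ≤ α simultaneously. Then the set D_α = {i < λ : for all β ∈ u^i_α, u^i_β = u^i_α ∩ β} is a closed unbounded subset of λ. -/
open Cardinal Set

/-- `C` is a closed unbounded subset of (the ordinals below) `lam`:
it consists of ordinals `< lam`, is unbounded in `lam`, and contains every nonzero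
ordinal `< lam` which is a limit of its elements. -/
def IsClubInOrd (lam : Ordinal) (C : Set Ordinal) : Prop :=
  C ⊆ Set.Iio lam ∧
  (∀ a < lam, ∃ b ∈ C, a ≤ b) ∧
  ∀ o < lam, o ≠ 0 → (∀ b < o, ∃ c ∈ C, b < c ∧ c < o) → o ∈ C

/-!
Call `j` a catch-up stage for `i` if every `u β i` with `β ∈ u a i` is contained in `u a j` and
every `u a i ∩ β` in `u β j`. Since all these sets have size `< λ` and `λ` is regular, every
`i < λ` has a catch-up stage `j < λ`; iterating `ω` times and taking the supremum yields points
of `D_a` above any given ordinal, as continuity at a limit stage `o` turns catch-up stages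
cofinal below `o` into the equality `u β o = u a o ∩ β`. The same continuity argument shows
that `D_a` is closed, a point of `D_a` being its own catch-up stage.
-/

open Order Ordinal

universe v w

def CatchesUp (u : Ordinal.{v} → Ordinal.{v} → Set Ordinal.{v}) (a i j : Ordinal.{v}) : Prop :=
  ∀ β ∈ u a i, u β i ⊆ u a j ∧ u a i ∩ Iio β ⊆ u β j

theorem exists_lt_ord_forall_le_of_mk_lt {X : Type w} {c : Cardinal.{v}} (hc : c.IsRegular)
    {S : Set X} (hS : lift.{v} #S < lift.{w} c) {g : X → Ordinal.{v}}
    (hg : ∀ x ∈ S, g x < c.ord) : ∃ j < c.ord, ∀ x ∈ S, g x ≤ j := by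
  have hbdd : BddAbove (range fun x : S => g x) :=
    ⟨c.ord, by rintro _ ⟨x, rfl⟩; exact (hg x x.2).le⟩
  refine ⟨⨆ x : S, g x, lift_iSup_lt_of_lt_cof ?_ fun x => hg x x.2,
    fun x hx => le_ciSup hbdd ⟨x, hx⟩⟩
  rwa [lift_ord, hc.lift.cof_ord]

theorem exists_lt_ord_subset_of_mk_lt {X : Type w} {c : Cardinal.{v}} (hc : c.IsRegular)
    {t : Ordinal.{v} → Set X} (hmono : ∀ i j, i ≤ j → j < c.ord → t i ⊆ t j) {S : Set X}
    (hSt : S ⊆ ⋃ i ∈ Iio c.ord, t i) (hS : lift.{v} #S < lift.{w} c) :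
    ∃ j < c.ord, S ⊆ t j := by
  have hmem : ∀ x ∈ S, ∃ i < c.ord, x ∈ t i := fun x hx => by simpa using hSt hx
  choose! g hg_lt hg using hmem
  obtain ⟨j, hj, hgj⟩ := exists_lt_ord_forall_le_of_mk_lt hc hS hg_lt
  exact ⟨j, hj, fun x hx => hmono _ _ (hgj x hx) hj (hg x hx)⟩

theorem exists_catchesUp {lam : Cardinal.{v}} (hreg : lam.IsRegular) {a : Ordinal.{v}}
    {u : Ordinal.{v} → Ordinal.{v} → Set Ordinal.{v}}
    (hsub : ∀ β ≤ a, ∀ i < lam.ord, u β i ⊆ Iio β)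
    (hcard : ∀ β ≤ a, ∀ i < lam.ord, #(u β i) < lift.{v + 1} lam)
    (hmono : ∀ β ≤ a, ∀ i j : Ordinal, i ≤ j → j < lam.ord → u β i ⊆ u β j)
    (hunion : ∀ β ≤ a, ⋃ i ∈ Iio lam.ord, u β i = Iio β) {i : Ordinal.{v}} (hi : i < lam.ord) :
    ∃ j, i < j ∧ j < lam.ord ∧ CatchesUp u a i j := by
  have hsmall : ∀ S ⊆ u a i, lift.{v} #S < lift.{v + 1} lam := fun S hS =>
    (Cardinal.lift_id'.{v, v + 1} _).trans_lt
      ((mk_le_mk_of_subset hS).trans_lt (hcard a le_rfl i hi))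
  have hstage : ∀ β ∈ u a i, ∃ j < lam.ord, u β i ⊆ u a j ∧ u a i ∩ Iio β ⊆ u β j := by
    intro β hβ
    have hβa : β < a := hsub a le_rfl i hi hβ
    obtain ⟨j₁, hj₁, h₁⟩ := exists_lt_ord_subset_of_mk_lt hreg (hmono a le_rfl) (S := u β i)
      (by rw [hunion a le_rfl]; exact fun γ hγ => (hsub β hβa.le i hi hγ).trans hβa)
      ((Cardinal.lift_id'.{v, v + 1} _).trans_lt (hcard β hβa.le i hi))
    obtain ⟨j₂, hj₂, h₂⟩ := exists_lt_ord_subset_of_mk_lt hreg (hmono β hβa.le)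
      (by rw [hunion β hβa.le]; exact inter_subset_right) (hsmall _ inter_subset_left)
    have hj := max_lt hj₁ hj₂
    exact ⟨max j₁ j₂, hj, h₁.trans (hmono a le_rfl _ _ (le_max_left _ _) hj),
      h₂.trans (hmono β hβa.le _ _ (le_max_right _ _) hj)⟩
  choose! g hg_lt hg using hstage
  obtain ⟨J, hJ, hgJ⟩ := exists_lt_ord_forall_le_of_mk_lt hreg (hsmall _ subset_rfl) hg_lt
  have hj : max J (succ i) < lam.ord := max_lt hJ ((isSuccLimit_ord hreg.aleph0_le).succ_lt hi)
  refine ⟨max J (succ i), (lt_succ i).trans_le (le_max_right _ _), hj, fun β hβ => ?_⟩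
  have hle : g β ≤ max J (succ i) := (hgJ β hβ).trans (le_max_left _ _)
  exact ⟨(hg β hβ).1.trans (hmono a le_rfl _ _ hle hj),
    (hg β hβ).2.trans (hmono β (hsub a le_rfl i hi hβ).le _ _ hle hj)⟩

theorem exists_gt_forall_lt_exists_rel {c : Cardinal.{v}} (hc : c.IsRegular) (hω : ℵ₀ < c)
    {R : Ordinal.{v} → Ordinal.{v} → Prop} (h : ∀ i < c.ord, ∃ j, i < j ∧ j < c.ord ∧ R i j)
    {a₀ : Ordinal.{v}} (ha₀ : a₀ < c.ord) :
    ∃ o < c.ord, a₀ < o ∧ ∀ b < o, ∃ i ∈ Ioo b o, ∃ j < o, R i j := by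
  choose! F hlt hF_lt hR using h
  have hiter : ∀ n, F^[n] a₀ < c.ord := by
    intro n
    induction n with
    | zero => exact ha₀
    | succ n ih => rw [Function.iterate_succ_apply']; exact hF_lt _ ih
  have hstep : ∀ n, F^[n] a₀ < F^[n + 1] a₀ := fun n => by
    rw [Function.iterate_succ_apply']; exact hlt _ (hiter n)
  refine ⟨nfp F a₀, nfp_lt_ord_of_isRegular hc hω.ne' hF_lt ha₀,
    (hstep 0).trans_le (iterate_le_nfp F a₀ 1), fun b hb => ?_⟩
  obtain ⟨n, hn⟩ := lt_nfp_iff.mp hb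
  refine ⟨F^[n] a₀, ⟨hn, (hstep n).trans_le (iterate_le_nfp F a₀ _)⟩, F^[n + 1] a₀,
    (hstep (n + 1)).trans_le (iterate_le_nfp F a₀ _), ?_⟩
  rw [Function.iterate_succ_apply']
  exact hR _ (hiter n)

theorem eq_inter_Iio_of_catchesUp {c : Ordinal.{v}} {a : Ordinal.{v}}
    {u : Ordinal.{v} → Ordinal.{v} → Set Ordinal.{v}}
    (hsub : ∀ β ≤ a, ∀ i < c, u β i ⊆ Iio β)
    (hmono : ∀ β ≤ a, ∀ i j : Ordinal, i ≤ j → j < c → u β i ⊆ u β j)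
    (hcont : ∀ β ≤ a, ∀ j < c, IsSuccLimit j → u β j = ⋃ i ∈ Iio j, u β i)
    {o : Ordinal.{v}} (hoc : o < c) (ho0 : o ≠ 0)
    (hcof : ∀ b < o, ∃ i ∈ Ioo b o, ∃ j < o, CatchesUp u a i j) :
    ∀ β ∈ u a o, u β o = u a o ∩ Iio β := by
  have hlim : IsSuccLimit o := isSuccLimit_iff.mpr ⟨ho0, fun b hb => by
    obtain ⟨i, hi, -⟩ := hcof b hb.lt
    exact hb.2 hi.1 hi.2⟩
  have hmem : ∀ β ≤ a, ∀ x ∈ u β o, ∃ i < o, x ∈ u β i := fun β hβ x hx => by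
    rw [hcont β hβ o hoc hlim] at hx
    simpa using hx
  have hup : ∀ β ≤ a, ∀ i j, i ≤ j → j ≤ o → u β i ⊆ u β j := fun β hβ i j hij hjo =>
    hmono β hβ i j hij (hjo.trans_lt hoc)
  intro β hβ
  have hβa : β ≤ a := (hsub a le_rfl o hoc hβ).le
  obtain ⟨i₁, hi₁, hβ₁⟩ := hmem a le_rfl β hβ
  ext γ
  constructor
  · intro hγ
    obtain ⟨i₂, hi₂, hγ₂⟩ := hmem β hβa γ hγ
    obtain ⟨i, ⟨hi, hio⟩, j, hjo, hij⟩ := hcof (max i₁ i₂) (max_lt hi₁ hi₂)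
    have hγj := (hij β (hup a le_rfl _ _ ((le_max_left _ _).trans hi.le) hio.le hβ₁)).1
      (hup β hβa _ _ ((le_max_right _ _).trans hi.le) hio.le hγ₂)
    exact ⟨hup a le_rfl _ _ hjo.le le_rfl hγj, hsub β hβa o hoc hγ⟩
  · rintro ⟨hγ, hγβ⟩
    obtain ⟨i₂, hi₂, hγ₂⟩ := hmem a le_rfl γ hγ
    obtain ⟨i, ⟨hi, hio⟩, j, hjo, hij⟩ := hcof (max i₁ i₂) (max_lt hi₁ hi₂)
    have hγj := (hij β (hup a le_rfl _ _ ((le_max_left _ _).trans hi.le) hio.le hβ₁)).2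
      ⟨hup a le_rfl _ _ ((le_max_right _ _).trans hi.le) hio.le hγ₂, hγβ⟩
    exact hup β hβa _ _ hjo.le le_rfl hγj

theorem stmt4_general (lam : Cardinal.{0}) (hreg : lam.IsRegular) (hunc : ℵ₀ < lam)
    (a : Ordinal.{0})
    (u : Ordinal.{0} → Ordinal.{0} → Set Ordinal.{0})
    (hsub : ∀ β ≤ a, ∀ i < lam.ord, u β i ⊆ Set.Iio β)
    (hcard : ∀ β ≤ a, ∀ i < lam.ord, #(u β i) < Cardinal.lift.{1} lam)
    (hmono : ∀ β ≤ a, ∀ i j : Ordinal, i ≤ j → j < lam.ord → u β i ⊆ u β j)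
    (hcont : ∀ β ≤ a, ∀ j < lam.ord, Order.IsSuccLimit j → u β j = ⋃ i ∈ Set.Iio j, u β i)
    (hunion : ∀ β ≤ a, ⋃ i ∈ Set.Iio lam.ord, u β i = Set.Iio β) :
    IsClubInOrd lam.ord
      {i | i < lam.ord ∧ ∀ β ∈ u a i, u β i = u a i ∩ Set.Iio β} := by
  refine ⟨fun i hi => hi.1, fun a₀ ha₀ => ?_, fun o ho ho0 hD => ⟨ho, ?_⟩⟩
  · obtain ⟨o, ho, hao, hcof⟩ := exists_gt_forall_lt_exists_rel hreg hunc
      (fun i hi => exists_catchesUp hreg hsub hcard hmono hunion hi) ha₀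
    exact ⟨o, ⟨ho, eq_inter_Iio_of_catchesUp hsub hmono hcont ho hao.ne_bot hcof⟩, hao.le⟩
  · refine eq_inter_Iio_of_catchesUp hsub hmono hcont ho ho0 fun b hb => ?_
    obtain ⟨i, hiD, hbi, hio⟩ := hD b hb
    exact ⟨i, ⟨hbi, hio⟩, i, hio, fun β hβ =>
      ⟨(hiD.2 β hβ).subset.trans inter_subset_left, (hiD.2 β hβ).superset⟩⟩

/-- Let `λ` be a regular uncountable cardinal and `a < λ⁺`.  Suppose that for every
`β ≤ a` we have a continuously increasing sequence `⟨u β i : i < λ⟩` of subsets of `β`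
(i.e. of `Set.Iio β`), each of cardinality `< λ`, with union `β`.  Then
`D_a = {i < λ : ∀ β ∈ u a i, u β i = u a i ∩ β}` is a closed unbounded subset of `λ`. -/
theorem stmt4 (lam : Cardinal.{0}) (hreg : lam.IsRegular) (hunc : ℵ₀ < lam)
    (a : Ordinal.{0}) (ha : a < (Order.succ lam).ord)
    (u : Ordinal.{0} → Ordinal.{0} → Set Ordinal.{0})
    (hsub : ∀ β ≤ a, ∀ i < lam.ord, u β i ⊆ Set.Iio β)
    (hcard : ∀ β ≤ a, ∀ i < lam.ord, #(u β i) < Cardinal.lift.{1} lam)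
    (hmono : ∀ β ≤ a, ∀ i j : Ordinal, i ≤ j → j < lam.ord → u β i ⊆ u β j)
    (hcont : ∀ β ≤ a, ∀ j < lam.ord, Order.IsSuccLimit j → u β j = ⋃ i ∈ Set.Iio j, u β i)
    (hunion : ∀ β ≤ a, ⋃ i ∈ Set.Iio lam.ord, u β i = Set.Iio β) :
    IsClubInOrd lam.ord
      {i | i < lam.ord ∧ ∀ β ∈ u a i, u β i = u a i ∩ Set.Iio β} :=
  stmt4_general lam hreg hunc a u hsub hcard hmono hcont hunion
end

section
/- There exists a doubly regular (hence regular) filter on every regular infinite cardinal λ: partition λ into λ pairwise disjoint pieces u_i each of size λ, choose a λ-regular filter D_i on each u_i, and let D = {A ⊆ λ : A ∩ u_i ∈ D_i for all but boundedly many i < λ}. Then D is a doubly regular filter on λ. -/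
open Cardinal Set

/-- A family of sets indexed by `ι` is *regular* if every finite subfamily has
nonempty intersection, while every infinite subfamily has empty intersection. -/
def RegFam {ι X : Type*} (A : ι → Set X) : Prop :=
  (∀ s : Finset ι, (⋂ i ∈ s, A i).Nonempty) ∧
  ∀ S : Set ι, S.Infinite → (⋂ i ∈ S, A i) = ∅

/-- `F` is a proper filter on the set `u`. -/
def IsProperFilterOn {X : Type*} (u : Set X) (F : Set (Set X)) : Prop :=
  (∀ A ∈ F, A ⊆ u) ∧ u ∈ F ∧
  (∀ A ∈ F, ∀ B, A ⊆ B → B ⊆ u → B ∈ F) ∧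
  (∀ A ∈ F, ∀ B ∈ F, A ∩ B ∈ F) ∧ ∅ ∉ F

/-- `C` is a closed unbounded subset of the linearly ordered type `X`:
it is unbounded, and contains every element which is a (proper) limit of its
elements from below. -/
def IsClubIn {X : Type*} [LinearOrder X] (C : Set X) : Prop :=
  (∀ a : X, ∃ b ∈ C, a ≤ b) ∧
  ∀ x : X, (∃ y, y < x) → (∀ y < x, ∃ c ∈ C, y < c ∧ c < x) → x ∈ C

/-- A collection `D` of subsets of the cardinal `λ` (represented by
`X = lam.ord.ToType`) is *doubly regular* if there are pairwise disjoint sets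
`u i ⊆ λ` (`i < λ`), each of cardinality `λ`, and `λ`-regular proper filters
`F i` on `u i` (i.e. each `F i` contains a regular family of size `λ`), such that
every `A ⊆ λ` with `A ∩ u i ∈ F i` for all but boundedly many `i < λ` belongs to `D`. -/
def DoublyRegular (lam : Cardinal) (D : Set (Set lam.ord.ToType)) : Prop :=
  ∃ u : lam.ord.ToType → Set lam.ord.ToType,
    ∃ F : lam.ord.ToType → Set (Set lam.ord.ToType),
      (∀ i j, i ≠ j → Disjoint (u i) (u j)) ∧
      (∀ i, Cardinal.mk (u i) = lam) ∧
      (∀ i, IsProperFilterOn (u i) (F i) ∧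
        ∃ A : lam.ord.ToType → Set lam.ord.ToType, (∀ β, A β ∈ F i) ∧ RegFam A) ∧
      ∀ A : Set lam.ord.ToType, (∃ b, ∀ i, A ∩ u i ∉ F i → i < b) → A ∈ D

/-- *Doubly⁺ regular*: as `DoublyRegular`, but with "for all but boundedly many `i`"
replaced by "for a club of `i < λ`". -/
def DoublyPlusRegular (lam : Cardinal) (D : Set (Set lam.ord.ToType)) : Prop :=
  ∃ u : lam.ord.ToType → Set lam.ord.ToType,
    ∃ F : lam.ord.ToType → Set (Set lam.ord.ToType),
      (∀ i j, i ≠ j → Disjoint (u i) (u j)) ∧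
      (∀ i, Cardinal.mk (u i) = lam) ∧
      (∀ i, IsProperFilterOn (u i) (F i) ∧
        ∃ A : lam.ord.ToType → Set lam.ord.ToType, (∀ β, A β ∈ F i) ∧ RegFam A) ∧
      ∀ A : Set lam.ord.ToType,
        (∃ C, IsClubIn C ∧ ∀ i ∈ C, A ∩ u i ∈ F i) → A ∈ D


/-!
Fix a bijection `e : λ ≃ λ × [λ]^{<ω}`, so that `λ` splits into the `λ` pieces
`u i = e⁻¹({i} × [λ]^{<ω})`, each a copy of `[λ]^{<ω}`. On `[λ]^{<ω}` the filter `atTop`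
(generated by the cones `{t | s ⊆ t}`) is `λ`-regular, witnessed by the sets `{t | β ∈ t}`:
finitely many of them share the point `s`, while no finite `t` lies in infinitely many.
Transporting `atTop` to each piece gives filters `f i`, and `D` is `atTop.bind f`, i.e. the sets
lying in `f i` for all large `i`. Its regular family is the union over all pieces of the copies
of `{t | β ∈ t}`.
-/

open Filter Function

theorem isProperFilterOn_of_mem {X : Type*} (f : Filter X) [f.NeBot] {u : Set X} (hu : u ∈ f) :
    IsProperFilterOn u {B | B ⊆ u ∧ B ∈ f} :=
  ⟨fun _ hB => hB.1, ⟨subset_rfl, hu⟩,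
    fun _ hA _ hAB hBu => ⟨hBu, mem_of_superset hA.2 hAB⟩,
    fun _ hA _ hB => ⟨inter_subset_left.trans hA.1, inter_mem hA.2 hB.2⟩,
    fun h => f.empty_notMem h.2⟩

theorem isProperFilterOn_univ_sets {X : Type*} (f : Filter X) [f.NeBot] :
    IsProperFilterOn univ f.sets := by
  convert isProperFilterOn_of_mem f univ_mem using 1
  simp only [subset_univ, true_and]
  rfl

theorem Filter.neBot_bind {α β : Type*} (f : Filter α) (m : α → Filter β) [f.NeBot]
    [∀ a, (m a).NeBot] : (f.bind m).NeBot :=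
  forall_mem_nonempty_iff_neBot.1 fun _ hs =>
    (nonempty_of_mem (mem_bind'.1 hs)).elim fun _ ha => nonempty_of_mem ha

section RegFam

variable {ι X Y : Type*} {A : ι → Set Y}

theorem regFam_mem_finset (Y : Type*) : RegFam fun β : Y => {t : Finset Y | β ∈ t} :=
  ⟨fun s => ⟨s, by simp⟩, fun S hS => eq_empty_of_forall_notMem fun t ht =>
    hS (t.finite_toSet.subset fun β hβ => mem_iInter₂.1 ht β hβ)⟩

theorem RegFam.preimage (hA : RegFam A) {g : X → Y} (hg : Surjective g) :
    RegFam fun i => g ⁻¹' A i := by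
  refine ⟨fun s => ?_, fun S hS => ?_⟩
  · rw [← preimage_iInter₂]
    exact (hA.1 s).preimage hg
  · rw [← preimage_iInter₂, hA.2 S hS, preimage_empty]

theorem RegFam.image (hA : RegFam A) {g : Y → X} (hg : Injective g) :
    RegFam fun i => g '' A i :=
  ⟨fun s => ((hA.1 s).image g).mono (image_iInter₂_subset _ _), fun S hS => by
    rw [← hg.injOn.image_biInter_eq hS.nonempty, hA.2 S hS, image_empty]⟩

end RegFam

/-- A filter `f i` containing `u i` is read as the proper filter `{B ⊆ u i | B ∈ f i}` on
`u i`; then `A ∩ u i` lies in it iff `A ∈ f i`, so "for all but boundedly many `i`" is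
`∀ᶠ i in atTop`. -/
theorem doublyRegular_bind {lam : Cardinal} (u : lam.ord.ToType → Set lam.ord.ToType)
    (f : lam.ord.ToType → Filter lam.ord.ToType) [∀ i, (f i).NeBot] (hu : ∀ i, u i ∈ f i)
    (hdisj : Pairwise (Disjoint on u)) (hcard : ∀ i, Cardinal.mk (u i) = lam)
    (hreg : ∀ i, ∃ A : lam.ord.ToType → Set lam.ord.ToType,
      (∀ β, A β ⊆ u i ∧ A β ∈ f i) ∧ RegFam A) :
    DoublyRegular lam (atTop.bind f).sets := by
  have mem_trace (A : Set lam.ord.ToType) (i) :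
      A ∩ u i ∈ {B | B ⊆ u i ∧ B ∈ f i} ↔ A ∈ f i := by
    simp [inter_mem_iff, hu i]
  refine ⟨u, fun i => {B | B ⊆ u i ∧ B ∈ f i}, hdisj, hcard,
    fun i => ⟨isProperFilterOn_of_mem (f i) (hu i), hreg i⟩, fun A ⟨b, hb⟩ => ?_⟩
  refine mem_bind'.2 (mem_of_superset (mem_atTop b) fun i hbi => ?_)
  by_contra hA
  exact (hb i ((mem_trace A i).not.2 hA)).not_ge hbi

section Pieces

variable {X : Type*} (e : X ≃ X × Finset X)

def pieceEmbedding (i : X) (t : Finset X) : X := e.symm (i, t)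

theorem pieceEmbedding_injective (i : X) : Injective (pieceEmbedding e i) :=
  fun _ _ h => congrArg Prod.snd (e.symm.injective h)

theorem pairwise_disjoint_range_pieceEmbedding :
    Pairwise (Disjoint on fun i => range (pieceEmbedding e i)) := by
  rintro i j hij
  refine disjoint_left.2 ?_
  rintro _ ⟨s, rfl⟩ ⟨t, h⟩
  exact hij (congrArg Prod.fst (e.symm.injective h)).symm

theorem snd_apply_pieceEmbedding (i : X) (t : Finset X) : (e (pieceEmbedding e i t)).2 = t := by
  simp [pieceEmbedding]

theorem surjective_snd_apply [Nonempty X] : Surjective fun x => (e x).2 :=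
  fun t => ⟨pieceEmbedding e (Classical.arbitrary X) t, snd_apply_pieceEmbedding e _ t⟩

theorem preimage_snd_apply_mem_map {l : Filter (Finset X)} {T : Set (Finset X)} (hT : T ∈ l)
    (i : X) : (fun x => (e x).2) ⁻¹' T ∈ map (pieceEmbedding e i) l := by
  rw [mem_map, preimage_preimage]
  simpa only [snd_apply_pieceEmbedding, preimage_id'] using hT

end Pieces

theorem nonempty_equiv_prod_finset (X : Type*) [Infinite X] : Nonempty (X ≃ X × Finset X) := by
  rw [← Cardinal.eq, Cardinal.mk_prod, Cardinal.mk_finset_of_infinite, Cardinal.lift_id,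
    Cardinal.mul_eq_self (Cardinal.infinite_iff.1 ‹_›)]

/-- On every regular infinite cardinal `λ` there exists a doubly regular — and hence
`λ`-regular — proper filter `D`: partition `λ` into `λ` pieces of size `λ`, take a
`λ`-regular filter on each piece, and let `D` consist of those `A ⊆ λ` with
`A ∩ u i ∈ D i` for all but boundedly many `i < λ`. -/
theorem stmt10 (lam : Cardinal) (hreg : lam.IsRegular) :
    ∃ D : Set (Set lam.ord.ToType),
      IsProperFilterOn (Set.univ : Set lam.ord.ToType) D ∧
      DoublyRegular lam D ∧
      ∃ A : lam.ord.ToType → Set lam.ord.ToType, (∀ β, A β ∈ D) ∧ RegFam A := by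
  have hmk : Cardinal.mk lam.ord.ToType = lam := by rw [Cardinal.mk_toType, Cardinal.card_ord]
  have : Infinite lam.ord.ToType := Cardinal.infinite_iff.2 (by rw [hmk]; exact hreg.aleph0_le)
  obtain ⟨e⟩ := nonempty_equiv_prod_finset lam.ord.ToType
  let f i := map (pieceEmbedding e i) (atTop : Filter (Finset lam.ord.ToType))
  have hmem (β) : {t : Finset lam.ord.ToType | β ∈ t} ∈ atTop :=
    mem_of_superset (mem_atTop {β}) fun _ => Finset.singleton_subset_iff.1
  have : (atTop.bind f).NeBot := neBot_bind _ _
  refine ⟨(atTop.bind f).sets, isProperFilterOn_univ_sets _, doublyRegular_bind _ f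
    (fun _ => range_mem_map) (pairwise_disjoint_range_pieceEmbedding e) (fun i => ?_) (fun i => ?_),
    fun β => (fun x => (e x).2) ⁻¹' {t | β ∈ t},
    fun β => mem_bind'.2 (univ_mem' (preimage_snd_apply_mem_map e (hmem β))),
    (regFam_mem_finset _).preimage (surjective_snd_apply e)⟩
  · rw [Cardinal.mk_range_eq _ (pieceEmbedding_injective e i), Cardinal.mk_finset_of_infinite, hmk]
  · exact ⟨_, fun β => ⟨image_subset_range _ _, image_mem_map (hmem β)⟩,
      (regFam_mem_finset _).image (pieceEmbedding_injective e i)⟩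
end

section
/- (Erdős–Rado application) Let λ be a cardinal of countable cofinality with λ > 2^{ℵ₀}, let C ⊆ λ be a countable cofinal subset, and let ⟨s_ξ : ξ < (2^{ℵ₀})⁺⟩ be pairwise distinct subsets of λ. Then there exist i ∈ C and a countably infinite set H of indices such that for all distinct ξ, ζ ∈ H, s_ξ ∩ i ≠ s_ζ ∩ i; in fact all the intersections s_ξ ∩ i for ξ ∈ H are pairwise distinct. -/
open Cardinal Set

/-!
Since `C` is cofinal and `λ` has no largest element, `s ξ` is determined by its traces
`s ξ ∩ c` for `c ∈ C`. If for every `c ∈ C` only countably many traces occurred, this would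
inject the `(2^ℵ₀)⁺` indices into a countable product of countable sets, of size
`ℵ₀^ℵ₀ = 2^ℵ₀`. So some `c ∈ C` carries infinitely many distinct traces, and choosing one
index for each of countably many of them gives `H`; the Erdős–Rado theorem is not needed.
-/

universe u v w

theorem Cardinal.mk_pi_le_two_power_aleph0 {κ : Type v} [Countable κ] (R : κ → Type w)
    [∀ k, Countable (R k)] : #(∀ k, R k) ≤ 2 ^ ℵ₀ :=
  calc #(∀ k, R k) = prod fun k => #(R k) := mk_pi R
    _ ≤ prod fun _ : κ => ℵ₀ := prod_le_prod _ _ fun _ => mk_le_aleph0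
    _ = ℵ₀ ^ lift.{w} #κ := by simp
    _ ≤ ℵ₀ ^ ℵ₀ := power_le_power_left aleph0_ne_zero (by simp)
    _ = 2 ^ ℵ₀ := power_self_eq le_rfl

theorem exists_infinite_range_eval_of_injective {ι : Type u} {κ : Type v} {β : Type w}
    [Countable κ] {f : ι → κ → β} (hf : Function.Injective f) (hι : 2 ^ ℵ₀ < #ι) :
    ∃ k, (range fun x => f x k).Infinite := by
  by_contra! hfin
  have : ∀ k, Countable (range fun x => f x k) := fun k => (hfin k).countable.to_subtype
  let g : ι → ∀ k, range fun x => f x k := fun x k => ⟨f x k, x, rfl⟩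
  have hg : Function.Injective g := fun x y h =>
    hf (funext fun k => congrArg Subtype.val (congrFun h k))
  have := (lift_mk_le_lift_mk_of_injective hg).trans
    (lift_le.mpr (Cardinal.mk_pi_le_two_power_aleph0 _))
  simp only [two_power_aleph0, lift_continuum, lift_le_continuum] at this
  exact (hι.trans_le this).false

theorem exists_countable_infinite_injOn_of_infinite_range {ι β : Type*} {f : ι → β}
    (hf : (range f).Infinite) : ∃ H : Set ι, H.Countable ∧ H.Infinite ∧ InjOn f H := by
  obtain ⟨u, -, hu, himg⟩ := (surjOn_image f univ).exists_subset_injOn_image_eq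
  have hu_inf : u.Infinite := fun hfin => hf (image_univ (f := f) ▸ himg ▸ hfin.image f)
  obtain ⟨H, hHu, hHc, hHi⟩ := hu_inf.exists_subset_countable_infinite
  exact ⟨H, hHc, hHi, hu.mono hHu⟩

theorem Set.injective_inter_Iio_of_cofinal {α : Type*} [Preorder α] [NoMaxOrder α] {C : Set α}
    (hC : ∀ a, ∃ c ∈ C, a ≤ c) :
    Function.Injective fun (S : Set α) (c : C) => S ∩ Iio (c : α) := by
  intro S T h
  ext b
  obtain ⟨d, hbd⟩ := exists_gt b
  obtain ⟨c, hcC, hdc⟩ := hC d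
  have hbc : b ∈ Iio c := hbd.trans_le hdc
  have := congrArg (b ∈ ·) (congrFun h ⟨c, hcC⟩)
  simpa [hbc] using this

theorem stmt15_general (lam : Cardinal)
    (hbig : (2 : Cardinal) ^ ℵ₀ < lam)
    (C : Set lam.ord.ToType) (hCc : C.Countable)
    (hCcof : ∀ a : lam.ord.ToType, ∃ c ∈ C, a ≤ c)
    (s : (Order.succ ((2 : Cardinal) ^ ℵ₀)).ord.ToType → Set lam.ord.ToType)
    (hs : Function.Injective s) :
    ∃ i ∈ C, ∃ H : Set (Order.succ ((2 : Cardinal) ^ ℵ₀)).ord.ToType,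
      H.Countable ∧ H.Infinite ∧
      ∀ ξ ∈ H, ∀ ζ ∈ H, ξ ≠ ζ → s ξ ∩ Set.Iio i ≠ s ζ ∩ Set.Iio i := by
  have : NoMaxOrder lam.ord.ToType :=
    noMaxOrder ((cantor ℵ₀).trans hbig).le
  have := hCc.to_subtype
  have htraces := (Set.injective_inter_Iio_of_cofinal hCcof).comp hs
  have hcard : (2 : Cardinal) ^ ℵ₀ < #(Order.succ ((2 : Cardinal) ^ ℵ₀)).ord.ToType := by
    simpa only [mk_toType, card_ord] using Order.lt_succ _
  obtain ⟨⟨i, hiC⟩, hinf⟩ := exists_infinite_range_eval_of_injective htraces hcard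
  obtain ⟨H, hHc, hHi, hHinj⟩ := exists_countable_infinite_injOn_of_infinite_range hinf
  exact ⟨i, hiC, H, hHc, hHi, fun ξ hξ ζ hζ hne heq => hne (hHinj hξ hζ heq)⟩

/-- (Erdős–Rado application.)  Let `λ` be a cardinal of countable cofinality with
`λ > 2^ℵ₀` (represented by the type `lam.ord.ToType` of ordinals below `λ`), let
`C ⊆ λ` be a countable cofinal subset, and let `⟨s ξ : ξ < (2^ℵ₀)⁺⟩` be pairwise
distinct subsets of `λ`.  Then there are `i ∈ C` and a countably infinite set `H`
of indices such that the traces `s ξ ∩ i = {β ∈ s ξ : β < i}`, for `ξ ∈ H`, are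
pairwise distinct. -/
theorem stmt15 (lam : Cardinal) (hcof : lam.ord.cof = ℵ₀)
    (hbig : (2 : Cardinal) ^ ℵ₀ < lam)
    (C : Set lam.ord.ToType) (hCc : C.Countable)
    (hCcof : ∀ a : lam.ord.ToType, ∃ c ∈ C, a ≤ c)
    (s : (Order.succ ((2 : Cardinal) ^ ℵ₀)).ord.ToType → Set lam.ord.ToType)
    (hs : Function.Injective s) :
    ∃ i ∈ C, ∃ H : Set (Order.succ ((2 : Cardinal) ^ ℵ₀)).ord.ToType,
      H.Countable ∧ H.Infinite ∧
      ∀ ξ ∈ H, ∀ ζ ∈ H, ξ ≠ ζ → s ξ ∩ Set.Iio i ≠ s ζ ∩ Set.Iio i :=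
  stmt15_general lam hbig C hCc hCcof s hs
end

section
/- Let λ be a regular cardinal and let 𝒜¹ be a regular family on λ contained in a family 𝒟 ⊆ 𝒫(λ) closed under finite intersections with ∅ ∉ 𝒟. Suppose E is an equivalence relation on λ such that for every S ⊆ λ with |S| < λ, the union ⋃_{ε∈S}[ε]_E contains no member of 𝒟 modulo small sets (precisely: for every B ∈ 𝒟 and every set W of size < λ, B ⊄ (⋃_{ε∈S}[ε]_E) ∪ W). Then for any enumeration ⟨C_i : i < λ⟩ of a subfamily of 𝒟 of size ≤ λ and any system of regular families ⟨u_γ : γ ∈ [i]_E⟩ on each E-class, there exist pairwise E-inequivalent elements ε_i (i < λ) and elements γ_i with γ_i E ε_i such that u_{γ_i} does not contain C_i ∩ [ε_i]_E. -/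
open Cardinal Set

/-!
Build the `ε i` by transfinite recursion along `λ`: at stage `i` fewer than `λ` classes have been
used, and by the smallness hypothesis their union does not cover `C i`, so some `ξ ∈ C i` lies in
a fresh class; take `ε i := ξ`. A point lies in only finitely many members of a regular family, so
on the infinite class of `ε i` there is `γ i` with `ε i ∉ u (γ i)`, although `ε i ∈ C i ∩ [ε i]_E`.
-/

namespace RegFam

variable {ι X : Type*} {A : ι → Set X}

theorem finite_setOf_mem (hA : RegFam A) (x : X) : {i | x ∈ A i}.Finite := by
  by_contra hinf
  have hx : x ∈ ⋂ i ∈ {i | x ∈ A i}, A i := mem_biInter fun _ hi => hi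
  rw [hA.2 _ hinf] at hx
  exact hx

theorem exists_notMem [Infinite ι] (hA : RegFam A) (x : X) : ∃ i, x ∉ A i :=
  (hA.finite_setOf_mem x).infinite_compl.nonempty

end RegFam

universe u

theorem exists_pairwise_of_forall_small {α β : Type u} [LinearOrder α] [WellFoundedLT α]
    {κ : Cardinal.{u}} (hsmall : ∀ i : α, #(Iio i) < κ) (P : α → β → Prop)
    {R : β → β → Prop} (hR : ∀ a b, R a b → R b a)
    (h : ∀ i (S : Set β), #S < κ → ∃ y, P i y ∧ ∀ e ∈ S, R y e) :
    ∃ f : α → β, (∀ i, P i (f i)) ∧ Pairwise fun i j => R (f i) (f j) := by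
  have hrange (i : α) (g : ∀ j < i, β) : #(range fun j : Iio i => g j j.2) < κ :=
    mk_range_le.trans_lt (hsmall i)
  let f : α → β := wellFounded_lt.fix fun i g => (h i _ (hrange i g)).choose
  have hf (i : α) : P i (f i) ∧ ∀ j < i, R (f i) (f j) := by
    have hfix : f i = (h i _ (hrange i fun j _ => f j)).choose := wellFounded_lt.fix_eq _ i
    have hspec := (h i _ (hrange i fun j _ => f j)).choose_spec
    rw [← hfix] at hspec
    exact ⟨hspec.1, fun j hj => hspec.2 _ ⟨⟨j, hj⟩, rfl⟩⟩
  refine ⟨f, fun i => (hf i).1, fun i j hij => ?_⟩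
  rcases hij.lt_or_gt with hlt | hgt
  · exact hR _ _ ((hf j).2 i hlt)
  · exact (hf i).2 j hgt

theorem stmt18_general (lam : Cardinal)
    (𝒟 : Set (Set lam.ord.ToType))
    (E : lam.ord.ToType → lam.ord.ToType → Prop) (hE : Equivalence E)
    (hclassinf : ∀ i, {γ | E γ i}.Infinite)
    (hnull : ∀ S : Set lam.ord.ToType, #S < lam →
      ∀ B ∈ 𝒟, ∀ W : Set lam.ord.ToType, #W < lam →
        ¬ B ⊆ (⋃ ε ∈ S, {x | E x ε}) ∪ W)
    (C : lam.ord.ToType → Set lam.ord.ToType) (hC : ∀ i, C i ∈ 𝒟)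
    (u : lam.ord.ToType → Set lam.ord.ToType)
    (hureg : ∀ ε, RegFam (fun γ : {γ // E γ ε} => u γ)) :
    ∃ ε γ : lam.ord.ToType → lam.ord.ToType,
      (∀ i j, i ≠ j → ¬ E (ε i) (ε j)) ∧
      (∀ i, E (γ i) (ε i)) ∧
      ∀ i, ¬ (C i ∩ {x | E x (ε i)} ⊆ u (γ i)) := by
  have hfresh (i : lam.ord.ToType) (S : Set lam.ord.ToType) (hS : #S < lam) :
      ∃ ξ, ξ ∈ C i ∧ ∀ e ∈ S, ¬ E ξ e := by
    obtain ⟨ξ, hξC, hξ⟩ := not_subset.1 (hnull S hS (C i) (hC i) S hS)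
    exact ⟨ξ, hξC, fun e he hξe => hξ (Or.inl (mem_biUnion he hξe))⟩
  obtain ⟨ε, hεC, hεE⟩ := exists_pairwise_of_forall_small
    (fun i => (mk_Iio_lt i (by simp)).trans_eq (by simp)) _
    (fun _ _ hne h => hne (hE.symm h)) hfresh
  have hγ (i : lam.ord.ToType) : ∃ γ : {γ // E γ (ε i)}, ε i ∉ u γ := by
    have : Infinite {γ // E γ (ε i)} := (hclassinf (ε i)).to_subtype
    exact (hureg (ε i)).exists_notMem (ε i)
  choose γ hγ using hγ
  exact ⟨ε, fun i => γ i, hεE, fun i => (γ i).2,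
    fun i hsub => hγ i (hsub ⟨hεC i, hE.refl _⟩)⟩

/-- (Subclaim of Theorem 7.)  Let `λ` be a regular cardinal (represented by
`lam.ord.ToType`) and let `𝒟` be a collection of subsets of `λ`, closed under binary
intersections, with `∅ ∉ 𝒟`, containing a regular family of size `λ`.  Let `E` be an
equivalence relation on `λ` whose classes are infinite, such that no member of `𝒟` is
covered by the union of fewer than `λ` many `E`-classes together with a set of size
`< λ`.  Then for every `λ`-enumeration `⟨C i : i < λ⟩` of members of `𝒟` and every
system `u` assigning to each class a regular family `⟨u γ : γ ∈ [ε]_E⟩` of subsets of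
that class, there are pairwise `E`-inequivalent elements `ε i` and elements
`γ i ∼_E ε i` (`i < λ`) with `u (γ i) ⊉ C i ∩ [ε i]_E`. -/
theorem stmt18 (lam : Cardinal) (hreg : lam.IsRegular)
    (𝒟 : Set (Set lam.ord.ToType))
    (hinter : ∀ A ∈ 𝒟, ∀ B ∈ 𝒟, A ∩ B ∈ 𝒟)
    (hproper : ∅ ∉ 𝒟)
    (hregfam : ∃ A : lam.ord.ToType → Set lam.ord.ToType,
      (∀ β, A β ∈ 𝒟) ∧ RegFam A)
    (E : lam.ord.ToType → lam.ord.ToType → Prop) (hE : Equivalence E)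
    (hclassinf : ∀ i, {γ | E γ i}.Infinite)
    (hnull : ∀ S : Set lam.ord.ToType, #S < lam →
      ∀ B ∈ 𝒟, ∀ W : Set lam.ord.ToType, #W < lam →
        ¬ B ⊆ (⋃ ε ∈ S, {x | E x ε}) ∪ W)
    (C : lam.ord.ToType → Set lam.ord.ToType) (hC : ∀ i, C i ∈ 𝒟)
    (u : lam.ord.ToType → Set lam.ord.ToType)
    (husub : ∀ ε γ, E γ ε → u γ ⊆ {x | E x ε})
    (hureg : ∀ ε, RegFam (fun γ : {γ // E γ ε} => u γ)) :
    ∃ ε γ : lam.ord.ToType → lam.ord.ToType,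
      (∀ i j, i ≠ j → ¬ E (ε i) (ε j)) ∧
      (∀ i, E (γ i) (ε i)) ∧
      ∀ i, ¬ (C i ∩ {x | E x (ε i)} ⊆ u (γ i)) :=
  stmt18_general lam 𝒟 E hE hclassinf hnull C hC u hureg
end

section
/- If D₁ is a doubly regular ultrafilter on a regular cardinal λ (witnessed by disjoint sets u_i ⊆ λ of size λ and λ-regular filters F_i on u_i) and D₂ is any ultrafilter on ω, then the product ultrafilter D₁ × D₂ on λ × ω is doubly regular (after identifying λ × ω with λ), witnessed by the sets u_i × ω and the filters F_i* on u_i × ω generated by {A × ω : A ∈ F_i}. -/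
/-! Everything is inherited from the first coordinate: `A ↦ A × ω` preserves regular families
and generates the filters `F* i`, and if `S ∩ (u i × ω)` contains `A × ω` with `A ∈ F i`, then
every `x ∈ A` has full section `{n | (x, n) ∈ S} = ω ∈ D₂`. Hence the set of `x` whose section
lies in `D₂` meets `u i` in a set of `F i` for all but boundedly many `i`, so it belongs to `D₁`
by the double regularity of `D₁`. -/

open Cardinal Set

/-- The filter on `u ×ˢ univ` generated by the sets `A × ω`, `A ∈ F`. -/
def prodFilter {X : Type*} (u : Set X) (F : Set (Set X)) : Set (Set (X × ℕ)) :=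
  {B | B ⊆ u ×ˢ (Set.univ : Set ℕ) ∧ ∃ A ∈ F, A ×ˢ (Set.univ : Set ℕ) ⊆ B}

theorem Cardinal.mk_prod_univ_nat {X : Type*} {u : Set X} (hu : ℵ₀ ≤ #u) :
    #(u ×ˢ (Set.univ : Set ℕ)) = #u := by
  rw [mk_congr (Equiv.Set.prod u Set.univ), mk_prod, mk_univ, mk_nat, lift_aleph0,
    lift_uzero]
  exact mul_eq_left hu hu aleph0_ne_zero

theorem RegFam.prod_univ {ι X Y : Type*} [Nonempty Y] {A : ι → Set X} (hA : RegFam A) :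
    RegFam fun i => A i ×ˢ (Set.univ : Set Y) := by
  obtain ⟨hfin, hinf⟩ := hA
  refine ⟨fun s => ?_, fun S hS => ?_⟩
  · obtain ⟨x, hx⟩ := hfin s
    obtain ⟨y⟩ := ‹Nonempty Y›
    exact ⟨(x, y), mem_iInter₂.2 fun i hi => ⟨mem_iInter₂.1 hx i hi, mem_univ y⟩⟩
  · refine eq_empty_of_forall_notMem fun p hp => ?_
    have hx : p.1 ∈ ⋂ i ∈ S, A i := mem_iInter₂.2 fun i hi => (mem_iInter₂.1 hp i hi).1
    rwa [hinf S hS] at hx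

section

variable {X : Type*} {u : Set X} {F : Set (Set X)}

theorem IsProperFilterOn.prodFilter_univ (hF : IsProperFilterOn u F) :
    IsProperFilterOn (u ×ˢ (Set.univ : Set ℕ)) (prodFilter u F) := by
  obtain ⟨-, huF, -, hinter, hempty⟩ := hF
  refine ⟨fun B hB => hB.1, ⟨subset_rfl, u, huF, subset_rfl⟩, ?_, ?_, ?_⟩
  · rintro B ⟨-, A, hA, hAB⟩ C hBC hCu
    exact ⟨hCu, A, hA, hAB.trans hBC⟩
  · rintro B ⟨hBu, A, hA, hAB⟩ C ⟨-, A', hA', hA'C⟩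
    refine ⟨inter_subset_left.trans hBu, A ∩ A', hinter A hA A' hA', ?_⟩
    rw [inter_prod]
    exact inter_subset_inter hAB hA'C
  · rintro ⟨-, A, hA, hA0⟩
    rw [subset_empty_iff, prod_eq_empty_iff] at hA0
    exact hempty (hA0.resolve_right univ_nonempty.ne_empty ▸ hA)

theorem IsProperFilterOn.sections_inter_mem {D₂ : Set (Set ℕ)} (hF : IsProperFilterOn u F)
    (hD₂ : Set.univ ∈ D₂) {S : Set (X × ℕ)} (hS : S ∩ u ×ˢ Set.univ ∈ prodFilter u F) :
    {x | {n | (x, n) ∈ S} ∈ D₂} ∩ u ∈ F := by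
  obtain ⟨-, A, hA, hAS⟩ := hS
  have hAu : A ⊆ u := hF.1 A hA
  refine hF.2.2.1 A hA _ (fun x hx => ⟨?_, hAu hx⟩) inter_subset_right
  have hsection : {n | (x, n) ∈ S} = Set.univ :=
    eq_univ_of_forall fun n => (hAS ⟨hx, mem_univ n⟩).1
  rw [mem_ofPred_eq, hsection]
  exact hD₂

end

theorem stmt19_general (lam : Cardinal) (hreg : lam.IsRegular)
    (D₁ : Set (Set lam.ord.ToType))
    (u : lam.ord.ToType → Set lam.ord.ToType)
    (hdisj : ∀ i j, i ≠ j → Disjoint (u i) (u j))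
    (hcard : ∀ i, #(u i) = lam)
    (F : lam.ord.ToType → Set (Set lam.ord.ToType))
    (hF : ∀ i, IsProperFilterOn (u i) (F i) ∧
      ∃ A : lam.ord.ToType → Set lam.ord.ToType, (∀ β, A β ∈ F i) ∧ RegFam A)
    (hDR : ∀ A : Set lam.ord.ToType,
      (∃ b, ∀ i, A ∩ u i ∉ F i → i < b) → A ∈ D₁)
    (D₂ : Set (Set ℕ))
    (hD₂ : IsProperFilterOn (Set.univ : Set ℕ) D₂) :
    (∀ i j, i ≠ j →
      Disjoint (u i ×ˢ (Set.univ : Set ℕ)) (u j ×ˢ (Set.univ : Set ℕ))) ∧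
    (∀ i, #↥(u i ×ˢ (Set.univ : Set ℕ)) = lam) ∧
    (∀ i, IsProperFilterOn (u i ×ˢ (Set.univ : Set ℕ)) (prodFilter (u i) (F i)) ∧
      ∃ A : lam.ord.ToType → Set (lam.ord.ToType × ℕ),
        (∀ β, A β ∈ prodFilter (u i) (F i)) ∧ RegFam A) ∧
    ∀ S : Set (lam.ord.ToType × ℕ),
      (∃ b, ∀ i, S ∩ (u i ×ˢ (Set.univ : Set ℕ)) ∉ prodFilter (u i) (F i) → i < b) →
      {i | {n | (i, n) ∈ S} ∈ D₂} ∈ D₁ := by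
  refine ⟨fun i j hij => disjoint_prod.2 (Or.inl (hdisj i j hij)), fun i => ?_, fun i => ?_, ?_⟩
  · rw [Cardinal.mk_prod_univ_nat ((hcard i).symm ▸ hreg.aleph0_le), hcard i]
  · obtain ⟨hFi, A, hAF, hAreg⟩ := hF i
    exact ⟨hFi.prodFilter_univ, fun β => A β ×ˢ Set.univ,
      fun β => ⟨prod_mono (hFi.1 _ (hAF β)) subset_rfl, A β, hAF β, subset_rfl⟩,
      hAreg.prod_univ⟩
  · rintro S ⟨b, hb⟩
    refine hDR _ ⟨b, fun i hi => ?_⟩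
    by_contra hbi
    exact hi (IsProperFilterOn.sections_inter_mem (hF i).1 hD₂.2.1 (not_imp_comm.1 (hb i) hbi))

/-- Let `D₁` be a doubly regular ultrafilter on the regular cardinal `λ` (represented
by `lam.ord.ToType`), witnessed by pairwise disjoint sets `u i` of size `λ` and
`λ`-regular proper filters `F i` on `u i`, and let `D₂` be an ultrafilter on `ω`.
Then the product ultrafilter `D₁ × D₂` on `λ × ω` (a set of size `λ`) is doubly
regular, witnessed by the sets `u i × ω` and the filters `F* i = prodFilter (u i) (F i)`
generated by `{A × ω : A ∈ F i}`: these sets are pairwise disjoint of cardinality `λ`,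
each `F* i` is a `λ`-regular proper filter on `u i × ω`, and every `S ⊆ λ × ω` with
`S ∩ (u i × ω) ∈ F* i` for all but boundedly many `i < λ` belongs to `D₁ × D₂`. -/
theorem stmt19 (lam : Cardinal) (hreg : lam.IsRegular)
    (D₁ : Set (Set lam.ord.ToType))
    (hD₁ : IsProperFilterOn (Set.univ : Set lam.ord.ToType) D₁)
    (hD₁ultra : ∀ B : Set lam.ord.ToType, B ∈ D₁ ∨ Bᶜ ∈ D₁)
    (u : lam.ord.ToType → Set lam.ord.ToType)
    (hdisj : ∀ i j, i ≠ j → Disjoint (u i) (u j))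
    (hcard : ∀ i, #(u i) = lam)
    (F : lam.ord.ToType → Set (Set lam.ord.ToType))
    (hF : ∀ i, IsProperFilterOn (u i) (F i) ∧
      ∃ A : lam.ord.ToType → Set lam.ord.ToType, (∀ β, A β ∈ F i) ∧ RegFam A)
    (hDR : ∀ A : Set lam.ord.ToType,
      (∃ b, ∀ i, A ∩ u i ∉ F i → i < b) → A ∈ D₁)
    (D₂ : Set (Set ℕ))
    (hD₂ : IsProperFilterOn (Set.univ : Set ℕ) D₂)
    (hD₂ultra : ∀ B : Set ℕ, B ∈ D₂ ∨ Bᶜ ∈ D₂) :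
    (∀ i j, i ≠ j →
      Disjoint (u i ×ˢ (Set.univ : Set ℕ)) (u j ×ˢ (Set.univ : Set ℕ))) ∧
    (∀ i, #↥(u i ×ˢ (Set.univ : Set ℕ)) = lam) ∧
    (∀ i, IsProperFilterOn (u i ×ˢ (Set.univ : Set ℕ)) (prodFilter (u i) (F i)) ∧
      ∃ A : lam.ord.ToType → Set (lam.ord.ToType × ℕ),
        (∀ β, A β ∈ prodFilter (u i) (F i)) ∧ RegFam A) ∧
    ∀ S : Set (lam.ord.ToType × ℕ),
      (∃ b, ∀ i, S ∩ (u i ×ˢ (Set.univ : Set ℕ)) ∉ prodFilter (u i) (F i) → i < b) →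
      {i | {n | (i, n) ∈ S} ∈ D₂} ∈ D₁ :=
  stmt19_general lam hreg D₁ u hdisj hcard F hF hDR D₂ hD₂
end
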